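/- arXiv:math/0612133 — 3 statements merged into one kernel-verified Lean document; each statement's English description precedes it below -/
import Mathlib

section
/- Let K be a field and V a K-vector space. If an element x of the exterior algebra Λ(V) satisfies φ ⌟ x = 0 (left contraction / interior product by φ) for every linear functional φ in the dual space V*, then x is a scalar, i.e., x lies in the image of the structure map K → Λ(V). Equivalently, the Koszul derivation δ_V : Λ(V) → Λ(V) ⊗ V, the unique superderivation with δ_V(v) = 1 ⊗ v for all v ∈ V (given on any basis (e_i) with dual basis (e_i*) by δ_V(x) = Σ_i (e_i* ⌟ x) ⊗ e_i), has kernel exactly K·1, so δ_V is injective in positive degrees. -/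
/-!
Fix a basis `(e_i)` of `M`. Every element of `Λ(M)` lies in the subalgebra generated by
finitely many `e_i`. Singling out one generator `e_a`, such an element is `y + e_a * z` with
`y, z` generated by the remaining ones. Contraction with the dual coordinate `e_a*` is an
antiderivation, so it kills `y` and `z` and sends `e_a * z` to `z`; hence `z = 0`, and induction
on the number of generators leaves a scalar. Unlike the Euler identity
`Σ e_i ∧ (e_i* ⌟ x) = n x`, this works in every characteristic, indeed over any commutative
ring once `M` has a basis.
-/

open Algebra

namespace CliffordAlgebra

variable {R M : Type*} [CommRing R] [AddCommGroup M] [Module R M] {Q : QuadraticForm R M}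

theorem contractLeft_mul (d : Module.Dual R M) (a b : CliffordAlgebra Q) :
    contractLeft d (a * b) = contractLeft d a * b + involute a * contractLeft d b := by
  induction a using CliffordAlgebra.induction generalizing b with
  | algebraMap r =>
    simp [contractLeft_algebraMap_mul, contractLeft_algebraMap]
  | ι m =>
    rw [contractLeft_ι_mul, contractLeft_ι, involute_ι, Algebra.smul_def, neg_mul,
      sub_eq_add_neg]
  | mul a₁ a₂ ha₁ ha₂ =>
    simp only [mul_assoc, ha₁, ha₂, map_mul]
    noncomm_ring
  | add a₁ a₂ ha₁ ha₂ =>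
    simp only [add_mul, map_add, ha₁, ha₂]
    abel

theorem contractLeft_eq_zero_of_mem_adjoin {d : Module.Dual R M} {s : Set M}
    (hs : ∀ v ∈ s, d v = 0) {x : CliffordAlgebra Q} (hx : x ∈ adjoin R (ι Q '' s)) :
    contractLeft d x = 0 := by
  induction hx using Algebra.adjoin_induction with
  | mem _ hv =>
    obtain ⟨v, hv, rfl⟩ := hv
    rw [contractLeft_ι, hs v hv, map_zero]
  | algebraMap r => exact contractLeft_algebraMap (Q := Q) d r
  | add _ _ _ _ hx hy => rw [map_add, hx, hy, add_zero]
  | mul _ _ _ _ hx hy => rw [contractLeft_mul, hx, hy, zero_mul, mul_zero, add_zero]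

theorem involute_mem_adjoin {s : Set M} {x : CliffordAlgebra Q}
    (hx : x ∈ adjoin R (ι Q '' s)) : involute x ∈ adjoin R (ι Q '' s) := by
  induction hx using Algebra.adjoin_induction with
  | mem _ hv =>
    obtain ⟨v, hv, rfl⟩ := hv
    rw [involute_ι]
    exact neg_mem (subset_adjoin ⟨v, hv, rfl⟩)
  | algebraMap r => rw [AlgHom.commutes]; exact algebraMap_mem _ r
  | add _ _ _ _ hx hy => rw [map_add]; exact add_mem hx hy
  | mul _ _ _ _ hx hy => rw [map_mul]; exact mul_mem hx hy

theorem exists_finset_mem_adjoin_ι_basis {I : Type*} (b : Module.Basis I R M)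
    (x : CliffordAlgebra Q) : ∃ s : Finset I, x ∈ adjoin R (ι Q '' (b '' s)) := by
  have hmono : Monotone fun s : Finset I => adjoin R (ι Q '' (b '' s)) :=
    fun s t hst => adjoin_mono (Set.image_mono (Set.image_mono (Finset.coe_subset.mpr hst)))
  have htop : ⊤ ≤ ⨆ s : Finset I, adjoin R (ι Q '' (b '' s)) := by
    rw [← adjoin_range_ι, adjoin_le_iff]
    rintro _ ⟨m, rfl⟩
    refine le_iSup (fun s : Finset I => adjoin R (ι Q '' (b '' s))) (b.repr m).support ?_
    refine span_le_adjoin R _ ?_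
    rw [Submodule.span_image]
    exact Submodule.mem_map_of_mem (b.mem_span_repr_support m)
  have hx := htop (Algebra.mem_top (x := x))
  rw [← SetLike.mem_coe, Subalgebra.coe_iSup_of_directed hmono.directed_le] at hx
  simpa using hx

end CliffordAlgebra

namespace ExteriorAlgebra

variable {R M : Type*} [CommRing R] [AddCommGroup M] [Module R M]

open CliffordAlgebra (involute involute_mem_adjoin contractLeft contractLeft_eq_zero_of_mem_adjoin)

theorem mul_ι_eq_ι_mul_involute (w : ExteriorAlgebra R M) (v : M) :
    w * ι R v = ι R v * involute w := by
  induction w using CliffordAlgebra.induction with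
  | algebraMap r => rw [AlgHom.commutes, Algebra.commutes]
  | ι m => rw [CliffordAlgebra.involute_ι, mul_neg, eq_neg_iff_add_eq_zero, ι_add_mul_swap]
  | mul a b ha hb => rw [mul_assoc, hb, ← mul_assoc, ha, map_mul, mul_assoc]
  | add a b ha hb => rw [add_mul, ha, hb, map_add, mul_add]

theorem exists_eq_add_ι_mul_of_mem_adjoin_insert {v : M} {s : Set M}
    {x : ExteriorAlgebra R M} (hx : x ∈ adjoin R (ι R '' insert v s)) :
    ∃ y ∈ adjoin R (ι R '' s), ∃ z ∈ adjoin R (ι R '' s), x = y + ι R v * z := by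
  rw [Set.image_insert_eq] at hx
  induction hx using Algebra.adjoin_induction with
  | mem _ hw =>
    rcases hw with rfl | hw
    · exact ⟨0, zero_mem _, 1, one_mem _, by rw [mul_one, zero_add]⟩
    · exact ⟨_, subset_adjoin hw, 0, zero_mem _, by rw [mul_zero, add_zero]⟩
  | algebraMap r =>
    exact ⟨algebraMap R _ r, algebraMap_mem _ r, 0, zero_mem _, by rw [mul_zero, add_zero]⟩
  | add _ _ _ _ h₁ h₂ =>
    obtain ⟨y₁, hy₁, z₁, hz₁, rfl⟩ := h₁
    obtain ⟨y₂, hy₂, z₂, hz₂, rfl⟩ := h₂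
    exact ⟨y₁ + y₂, add_mem hy₁ hy₂, z₁ + z₂, add_mem hz₁ hz₂, by noncomm_ring⟩
  | mul _ _ _ _ h₁ h₂ =>
    obtain ⟨y₁, hy₁, z₁, hz₁, rfl⟩ := h₁
    obtain ⟨y₂, hy₂, z₂, hz₂, rfl⟩ := h₂
    refine ⟨y₁ * y₂, mul_mem hy₁ hy₂, involute y₁ * z₂ + z₁ * y₂,
      add_mem (mul_mem (involute_mem_adjoin hy₁) hz₂) (mul_mem hz₁ hy₂), ?_⟩
    -- moving `ι R v` to the left through `z₁` produces `ι R v * ι R v = 0`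
    have hv : ι R v * z₁ * ι R v = 0 := by
      rw [mul_assoc, mul_ι_eq_ι_mul_involute, ← mul_assoc, ι_sq_zero, zero_mul]
    calc (y₁ + ι R v * z₁) * (y₂ + ι R v * z₂)
        = y₁ * y₂ + y₁ * ι R v * z₂ + ι R v * z₁ * y₂ +
            ι R v * z₁ * ι R v * z₂ := by noncomm_ring
      _ = _ := by rw [hv, mul_ι_eq_ι_mul_involute]; noncomm_ring

theorem mem_range_algebraMap_of_contractLeft_coord_eq_zero {I : Type*}
    (b : Module.Basis I R M) (s : Finset I) {x : ExteriorAlgebra R M}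
    (hx : x ∈ adjoin R (ι R '' (b '' s))) (h : ∀ i ∈ s, contractLeft (b.coord i) x = 0) :
    x ∈ (algebraMap R (ExteriorAlgebra R M)).range := by
  classical
  induction s using Finset.induction_on generalizing x with
  | empty =>
    simpa [Algebra.adjoin_empty, Algebra.mem_bot] using hx
  | @insert a s ha ih =>
    rw [Finset.coe_insert, Set.image_insert_eq] at hx
    obtain ⟨y, hy, z, hz, rfl⟩ := exists_eq_add_ι_mul_of_mem_adjoin_insert hx
    have hcoord : ∀ v ∈ b '' s, b.coord a v = 0 := by
      rintro _ ⟨i, hi, rfl⟩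
      rw [b.coord_apply, b.repr_self_apply, if_neg (ne_of_mem_of_not_mem hi ha)]
    have hz0 : z = 0 := by
      simpa [contractLeft_eq_zero_of_mem_adjoin hcoord hy,
        contractLeft_eq_zero_of_mem_adjoin hcoord hz, CliffordAlgebra.contractLeft_ι_mul] using
        h a (Finset.mem_insert_self a s)
    rw [hz0, mul_zero, add_zero] at h ⊢
    exact ih hy fun i hi => h i (Finset.mem_insert_of_mem hi)

end ExteriorAlgebra

/-- **The Koszul derivation lemma** (Lemma 6.3 of the paper): if an element `x` of the
exterior algebra `Λ(V)` (realized as the Clifford algebra of the zero quadratic form on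
`V`) satisfies `φ ⌟ x = 0` (left contraction) for every linear functional
`φ : V → K`, then `x` is a scalar, i.e. it lies in the image of the structure map
`K → Λ(V)`.  Hence the Koszul derivation `δ_V(x) = Σᵢ (eᵢ* ⌟ x) ⊗ eᵢ` has kernel
exactly `K·1` and is injective in positive degrees. -/
theorem exteriorAlgebra_contract_eq_zero_imp_scalar
    (K : Type*) [Field K] (V : Type*) [AddCommGroup V] [Module K V]
    (x : CliffordAlgebra (0 : QuadraticForm K V))
    (h : ∀ φ : Module.Dual K V, CliffordAlgebra.contractLeft φ x = 0) :
    x ∈ (algebraMap K (CliffordAlgebra (0 : QuadraticForm K V))).range := by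
  obtain ⟨s, hs⟩ :=
    CliffordAlgebra.exists_finset_mem_adjoin_ι_basis (Module.Basis.ofVectorSpace K V) x
  exact ExteriorAlgebra.mem_range_algebraMap_of_contractLeft_coord_eq_zero _ s hs fun i _ => h _
end

section
/- Let p be a prime and let i, r be natural numbers with r ≤ p − 1. Say that a natural number n is of type (i, r) if there exist natural numbers a and s with s ≤ r and n = p^i·(p·a + s). Suppose n is of type (i, r) and k is a natural number such that the binomial coefficient choose(n, k) is not divisible by p. Then k is of type (i, r), and n + k·(p − 1) is of type (i, r). -/
/-- A natural number `n` is of type `(i, r)` (for the prime `p`) if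
`n = p^i * (p*a + s)` for some naturals `a` and `s ≤ r`. -/
def IsOfType (p i r n : ℕ) : Prop :=
  ∃ a s : ℕ, s ≤ r ∧ n = p ^ i * (p * a + s)

private lemma aux_step {p n k : ℕ} (hp : p.Prime) (h : ¬ p ∣ n.choose k) :
    ¬ p ∣ (n % p).choose (k % p) ∧ ¬ p ∣ (n / p).choose (k / p) := by
  have hmod := @Choose.choose_modEq_choose_mod_mul_choose_div_nat n k p ⟨hp⟩
  constructor <;> intro hd <;> apply h
  · exact (Nat.modEq_zero_iff_dvd).mp (hmod.trans (Nat.modEq_zero_iff_dvd.mpr (hd.mul_right _)))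
  · exact (Nat.modEq_zero_iff_dvd).mp (hmod.trans (Nat.modEq_zero_iff_dvd.mpr (hd.mul_left _)))

private lemma aux_pow {p : ℕ} (hp : p.Prime) :
    ∀ (i m k : ℕ), ¬ p ∣ (p ^ i * m).choose k → p ^ i ∣ k ∧ ¬ p ∣ m.choose (k / p ^ i) := by
  intro i
  induction i with
  | zero => intro m k h; simpa using h
  | succ i ih =>
    intro m k h
    have h' : ¬ p ∣ (p ^ i * (p * m)).choose k := by
      rwa [show p ^ i * (p * m) = p ^ (i + 1) * m by ring]
    obtain ⟨hdvd, h2⟩ := ih (p * m) k h'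
    obtain ⟨h3, h4⟩ := aux_step hp h2
    have hpm : (p * m) % p = 0 := Nat.mul_mod_right p m
    have hkm : (k / p ^ i) % p = 0 := by
      by_contra hne
      rw [hpm] at h3
      exact h3 (by simp [Nat.choose_eq_zero_of_lt (Nat.pos_of_ne_zero hne)])
    constructor
    · have : p ∣ k / p ^ i := Nat.dvd_of_mod_eq_zero hkm
      obtain ⟨c, hc⟩ := this
      obtain ⟨d, hd⟩ := hdvd
      refine ⟨c, ?_⟩
      have hd' : d = p * c := by
        have := Nat.mul_div_cancel_left d (Nat.pos_of_ne_zero (pow_ne_zero i hp.ne_zero))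
        rw [hd, Nat.mul_div_cancel_left _ (Nat.pos_of_ne_zero (pow_ne_zero i hp.ne_zero))] at hc
        omega
      rw [hd, hd']; ring
    · have e1 : (p * m) / p = m := Nat.mul_div_cancel_left m hp.pos
      have e2 : (k / p ^ i) / p = k / p ^ (i + 1) := by
        rw [Nat.div_div_eq_div_mul, ← pow_succ]
      rwa [e1, e2] at h4

private lemma aux_ring (q a s b c t : ℕ) (hc : c = q * b + t) (hts : t ≤ s) :
    (q + 1) * a + s + (b + c) * q = (q + 1) * (a + c) + (s - t) := by
  obtain ⟨u, rfl⟩ : ∃ u, s = u + t := ⟨s - t, by omega⟩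
  subst hc
  have : u + t - t = u := by omega
  rw [this]; ring

/-- The combinatorial consequence of Lucas's theorem used in the proof of Lemma 7.9
of the paper: if `n` is of type `(i, r)` with `r ≤ p - 1` and `p` does not divide
`choose n k`, then both `k` and `n + k*(p-1)` are of type `(i, r)`. -/
theorem type_closed_under_steenrod_and_coproduct
    (p : ℕ) (hp : p.Prime) (i r : ℕ) (hr : r ≤ p - 1) (n k : ℕ)
    (hn : IsOfType p i r n) (hk : ¬ p ∣ n.choose k) :
    IsOfType p i r k ∧ IsOfType p i r (n + k * (p - 1)) := by
  obtain ⟨a, s, hs, rfl⟩ := hn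
  obtain ⟨hdvd, h2⟩ := aux_pow hp i (p * a + s) k hk
  set m := k / p ^ i with hm
  have hkm : k = p ^ i * m := (Nat.div_mul_cancel hdvd).symm.trans (by ring)
  obtain ⟨h3, _⟩ := aux_step hp h2
  have hslt : s < p := by have := hp.two_le; omega
  have hmods : (p * a + s) % p = s := by
    rw [Nat.mul_add_mod, Nat.mod_eq_of_lt hslt]
  rw [hmods] at h3
  set t := m % p with ht
  have hts : t ≤ s := by
    by_contra hgt
    exact h3 (by rw [Nat.choose_eq_zero_of_lt (by omega)]; exact dvd_zero p)
  set b := m / p with hb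
  have hmbt : m = p * b + t := (Nat.div_add_mod m p).symm
  constructor
  · exact ⟨b, t, le_trans hts hs, by rw [hkm, hmbt]⟩
  · -- n + k*(p-1) = p^i * (p*(a + c) + (s - t)) where c = m - b satisfies c = (p-1)*b + t
    obtain ⟨q, hq⟩ : ∃ q, p = q + 1 := ⟨p - 1, by have := hp.pos; omega⟩
    refine ⟨a + (q * b + t), s - t, by omega, ?_⟩
    have key : (q + 1) * a + s + (b + (q * b + t)) * q
        = (q + 1) * (a + (q * b + t)) + (s - t) :=
      aux_ring q a s b (q * b + t) t rfl hts
    have hm2 : m = (q + 1) * b + t := by rw [← hq]; exact hmbt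
    calc p ^ i * (p * a + s) + k * (p - 1)
        = p ^ i * ((q + 1) * a + s + (b + (q * b + t)) * q) := by
          rw [hkm, hm2, hq, Nat.add_sub_cancel]; ring
      _ = p ^ i * ((q + 1) * (a + (q * b + t)) + (s - t)) := by rw [key]
      _ = p ^ i * (p * (a + (q * b + t)) + (s - t)) := by rw [hq]
end

section
/- Let p be a prime and n ≥ 1. Let G = GL_n(F_p) (invertible n × n matrices over F_p = ZMod p) act on the polynomial ring R = F_p[X_1, …, X_n] by linear substitution of the variables (a matrix g sends each variable X_j to the linear form Σ_i g_{ij} X_i, extended to an algebra automorphism). Let E ⊆ R be the image of the expansion map determined by X_i ↦ X_i^p; E is a G-stable subspace. Then for every simple module S over the group algebra F_p[G], S occurs as a composition factor of the G-module R/E: there exist F_p[G]-submodules N ⊆ N′ of R/E with N′/N isomorphic to S. -/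
/-!
Every simple `F_p[G]`-module is a quotient of `F_p[G]`, and over an Artinian ring such a module
is a subquotient of every faithful module; so it suffices that the operators of `G` on `R/E` are
linearly independent. Suppose `∑ c_g g` kills `R/E`. The partial derivatives `∂_i` kill
`E = {f ^ p}`, and on `g (X_j f ^ p) = (∑_i g_{ij} X_i) (g f) ^ p` they leave `g_{ij} (g f) ^ p`;
hence `(∑_g c_g g_{ij} g f) ^ p = 0` for every `f`. Distinct automorphisms of the domain `R` are
linearly independent (Dedekind), so `c_g g_{ij} = 0`, and since no column of `g` vanishes, `c = 0`.
-/

open MvPolynomial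

/-- The linear-substitution representation of `GL_n(F_p)` on the polynomial ring
`R = F_p[X_1, …, X_n]`: a matrix `g` sends each variable `X_j` to the linear form
`Σ_i g_{ij} X_i`, extended to an algebra (in particular linear) endomorphism. -/
noncomputable def glSubstitution (p n : ℕ) :
    Representation (ZMod p) (GL (Fin n) (ZMod p)) (MvPolynomial (Fin n) (ZMod p)) where
  toFun g := (bind₁ fun j : Fin n =>
      ∑ i : Fin n, (g : Matrix (Fin n) (Fin n) (ZMod p)) i j •
        (X i : MvPolynomial (Fin n) (ZMod p))).toLinearMap
  map_one' := by
    have h : (fun j : Fin n => ∑ i : Fin n,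
        ((1 : GL (Fin n) (ZMod p)) : Matrix (Fin n) (Fin n) (ZMod p)) i j •
          (X i : MvPolynomial (Fin n) (ZMod p))) = X := by
      funext j
      simp [Matrix.one_apply, ite_smul]
    show (bind₁ fun j : Fin n => ∑ i : Fin n,
        ((1 : GL (Fin n) (ZMod p)) : Matrix (Fin n) (Fin n) (ZMod p)) i j •
          (X i : MvPolynomial (Fin n) (ZMod p))).toLinearMap = 1
    rw [h]
    refine LinearMap.ext fun f => ?_
    simp [bind₁_X_left]
  map_mul' g h := by
    refine LinearMap.ext fun f => ?_
    show (bind₁ fun j : Fin n => ∑ i : Fin n,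
        ((g * h : GL (Fin n) (ZMod p)) : Matrix (Fin n) (Fin n) (ZMod p)) i j •
          (X i : MvPolynomial (Fin n) (ZMod p))) f
      = (bind₁ fun j : Fin n => ∑ i : Fin n,
          (g : Matrix (Fin n) (Fin n) (ZMod p)) i j •
            (X i : MvPolynomial (Fin n) (ZMod p)))
        ((bind₁ fun j : Fin n => ∑ i : Fin n,
          (h : Matrix (Fin n) (Fin n) (ZMod p)) i j •
            (X i : MvPolynomial (Fin n) (ZMod p))) f)
    rw [bind₁_bind₁]
    congr 1
    apply algHom_ext
    intro j
    rw [bind₁_X_right, bind₁_X_right, map_sum]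
    simp only [map_smul, bind₁_X_right, Units.val_mul, Matrix.mul_apply,
      Finset.smul_sum, smul_smul, Finset.sum_smul]
    rw [Finset.sum_comm]
    simp [mul_comm]

/-- The subspace `E ⊆ F_p[X_1,…,X_n]` of polynomials in the `p`-th powers of the
variables, i.e. the image of the expansion map determined by `X_i ↦ X_i^p`. -/
noncomputable def expandRange (p n : ℕ) : Submodule (ZMod p) (MvPolynomial (Fin n) (ZMod p)) :=
  LinearMap.range (MvPolynomial.expand p :
    MvPolynomial (Fin n) (ZMod p) →ₐ[ZMod p] MvPolynomial (Fin n) (ZMod p)).toLinearMap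

/-- `E` is stable under the substitution action of `GL_n(F_p)` (the entries of `g`
are fixed by the Frobenius, so expansion commutes with linear substitution). -/
theorem expandRange_stable (p n : ℕ) [Fact p.Prime] (g : GL (Fin n) (ZMod p)) :
    expandRange p n ≤ (expandRange p n).comap (glSubstitution p n g) := by
  rintro - ⟨f, rfl⟩
  haveI : ExpChar (MvPolynomial (Fin n) (ZMod p)) p := ExpChar.prime Fact.out
  have hexp : ∀ φ : MvPolynomial (Fin n) (ZMod p),
      MvPolynomial.expand p φ =
        bind₁ (fun i : Fin n => (X i : MvPolynomial (Fin n) (ZMod p)) ^ p) φ := by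
    intro φ
    have h : (MvPolynomial.expand p : MvPolynomial (Fin n) (ZMod p) →ₐ[ZMod p] _)
        = bind₁ (fun i : Fin n => (X i : MvPolynomial (Fin n) (ZMod p)) ^ p) := by
      apply algHom_ext
      intro i
      simp
    rw [h]
  have hlin : ∀ i : Fin n,
      MvPolynomial.expand p (∑ k : Fin n, (g : Matrix (Fin n) (Fin n) (ZMod p)) k i •
          (X k : MvPolynomial (Fin n) (ZMod p)))
        = (∑ k : Fin n, (g : Matrix (Fin n) (Fin n) (ZMod p)) k i •
          (X k : MvPolynomial (Fin n) (ZMod p))) ^ p := by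
    intro i
    rw [map_sum, sum_pow_char]
    refine Finset.sum_congr rfl fun k _ => ?_
    rw [map_smul, expand_X, smul_pow, ZMod.pow_card]
  refine Submodule.mem_comap.mpr ⟨(bind₁ fun j : Fin n => ∑ i : Fin n,
      (g : Matrix (Fin n) (Fin n) (ZMod p)) i j •
        (X i : MvPolynomial (Fin n) (ZMod p))) f, ?_⟩
  show (MvPolynomial.expand p) ((bind₁ fun j : Fin n => ∑ i : Fin n,
      (g : Matrix (Fin n) (Fin n) (ZMod p)) i j •
        (X i : MvPolynomial (Fin n) (ZMod p))) f)
    = (bind₁ fun j : Fin n => ∑ i : Fin n,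
      (g : Matrix (Fin n) (Fin n) (ZMod p)) i j •
        (X i : MvPolynomial (Fin n) (ZMod p))) ((MvPolynomial.expand p) f)
  rw [expand_bind₁, hexp f, bind₁_bind₁]
  congr 1
  apply algHom_ext
  intro i
  rw [bind₁_X_right, bind₁_X_right, map_pow, bind₁_X_right, hlin i]

/-- The induced representation of `GL_n(F_p)` on the quotient `R/E`. -/
noncomputable def glSubstitutionQuot (p n : ℕ) [Fact p.Prime] :
    Representation (ZMod p) (GL (Fin n) (ZMod p))
      (MvPolynomial (Fin n) (ZMod p) ⧸ expandRange p n) where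
  toFun g := Submodule.mapQ _ _ (glSubstitution p n g) (expandRange_stable p n g)
  map_one' := by
    apply Submodule.linearMap_qext
    ext f
    simp [Submodule.mapQ_apply]
  map_mul' g h := by
    apply Submodule.linearMap_qext
    ext f
    simp [Submodule.mapQ_apply]

section Subquotient

variable {A M S : Type*} [Ring A] [AddCommGroup M] [Module A M] [AddCommGroup S] [Module A S]
  [IsSimpleModule A S]

/-- With `φ a = a • x`, the map `a ↦ φ a` induces `J ⧸ (J ⊓ ker ψ) ≃ φ J ⧸ φ (J ⊓ ker ψ)`, and
`J ⧸ (J ⊓ ker ψ) ≃ S` because `ψ J` is a nonzero submodule of the simple module `S`. -/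
theorem exists_subquotient_equiv_of_inf_ker_le {ψ : A →ₗ[A] S} {J : Submodule A A}
    (hJ : ¬ J ≤ LinearMap.ker ψ) (x : M)
    (hx : J ⊓ LinearMap.ker (LinearMap.toSpanSingleton A M x) ≤ LinearMap.ker ψ) :
    ∃ N N' : Submodule A M, N ≤ N' ∧ Nonempty ((N' ⧸ N.comap N'.subtype) ≃ₗ[A] S) := by
  set φ := LinearMap.toSpanSingleton A M x
  set N' := J.map φ
  set N := (J ⊓ LinearMap.ker ψ).map φ
  let toQuot : J →ₗ[A] N' ⧸ N.comap N'.subtype := (N.comap N'.subtype).mkQ ∘ₗ φ.submoduleMap J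
  let toS : J →ₗ[A] S := ψ ∘ₗ J.subtype
  have hQuot : Function.Surjective toQuot :=
    (Submodule.mkQ_surjective _).comp (φ.submoduleMap_surjective J)
  have hS : Function.Surjective toS := by
    rw [← LinearMap.range_eq_top]
    refine (IsSimpleOrder.eq_bot_or_eq_top _).resolve_left fun h => hJ fun a ha => ?_
    exact LinearMap.mem_ker.mpr (LinearMap.congr_fun (LinearMap.range_eq_bot.mp h) ⟨a, ha⟩)
  have hker : LinearMap.ker toQuot = LinearMap.ker toS := by
    ext ⟨a, ha⟩
    simp only [LinearMap.mem_ker, toQuot, toS, LinearMap.comp_apply, Submodule.mkQ_apply,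
      Submodule.Quotient.mk_eq_zero, Submodule.mem_comap, Submodule.subtype_apply]
    constructor
    · rintro ⟨b, ⟨hb, hbψ⟩, hab⟩
      have hdiff : a - b ∈ J ⊓ LinearMap.ker φ := Submodule.mem_inf.mpr
        ⟨J.sub_mem ha hb, LinearMap.mem_ker.mpr (by rw [map_sub, hab]; exact sub_self _)⟩
      simpa [LinearMap.mem_ker.mp hbψ, sub_eq_zero] using hx hdiff
    · exact fun h => ⟨a, ⟨ha, h⟩, rfl⟩
  exact ⟨N, N', Submodule.map_mono inf_le_left,
    ⟨(toQuot.quotKerEquivOfSurjective hQuot).symm ≪≫ₗ Submodule.quotEquivOfEq _ _ hker ≪≫ₗ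
      toS.quotKerEquivOfSurjective hS⟩⟩

/-- Write `S = A ⧸ ker ψ`. Descending from `J = ⊤`, cut `J` down by annihilators
`ker (a ↦ a • x)` until the next cut would land inside `ker ψ`; faithfulness supplies each cut
and the Artinian property stops the descent. -/
theorem exists_subquotient_equiv_of_faithfulSMul [IsArtinianRing A] [FaithfulSMul A M] :
    ∃ N N' : Submodule A M, N ≤ N' ∧ Nonempty ((N' ⧸ N.comap N'.subtype) ≃ₗ[A] S) := by
  have : Nontrivial S := IsSimpleModule.nontrivial A S
  obtain ⟨s, hs⟩ := exists_ne (0 : S)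
  set ψ := LinearMap.toSpanSingleton A S s
  suffices h : ∀ J : Submodule A A, ¬ J ≤ LinearMap.ker ψ →
      ∃ N N' : Submodule A M, N ≤ N' ∧ Nonempty ((N' ⧸ N.comap N'.subtype) ≃ₗ[A] S) from
    h ⊤ fun h => hs (by simpa [ψ] using h (Submodule.mem_top (x := 1)))
  intro J
  induction J using WellFoundedLT.induction with
  | _ J ih =>
  intro hJ
  obtain ⟨a, haJ, haψ⟩ := Set.not_subset.mp hJ
  have ha : a ≠ 0 := by rintro rfl; exact haψ (zero_mem _)
  obtain ⟨x, hx⟩ : ∃ x : M, a • x ≠ 0 := by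
    by_contra! h
    exact ha (eq_of_smul_eq_smul fun x => by rw [h x, zero_smul])
  by_cases hle : J ⊓ LinearMap.ker (LinearMap.toSpanSingleton A M x) ≤ LinearMap.ker ψ
  · exact exists_subquotient_equiv_of_inf_ker_le hJ x hle
  · exact ih _ (inf_lt_left.mpr fun h => hx (h haJ)) hle

end Subquotient

namespace Representation

variable {k G V : Type*} [CommRing k] [Monoid G] [AddCommGroup V] [Module k V]
  (ρ : Representation k G V)

theorem asAlgebraHom_injective (hρ : LinearIndependent k ρ) :
    Function.Injective ρ.asAlgebraHom := by
  refine (injective_iff_map_eq_zero _).mpr fun c hc => ?_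
  rw [asAlgebraHom_def, MonoidAlgebra.lift_apply, ← Finsupp.linearCombination_apply] at hc
  exact MonoidAlgebra.coeff_eq_zero.mp (linearIndependent_iff.mp hρ _ hc)

theorem faithfulSMul_asModule (hρ : LinearIndependent k ρ) :
    FaithfulSMul (MonoidAlgebra k G) ρ.asModule :=
  ⟨fun h => ρ.asAlgebraHom_injective hρ (LinearMap.ext h)⟩

end Representation

theorem Matrix.GeneralLinearGroup.exists_apply_ne_zero {m R : Type*} [Fintype m] [DecidableEq m]
    [CommRing R] [Nontrivial R] (g : GL m R) (j : m) : ∃ i, (g : Matrix m m R) i j ≠ 0 := by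
  by_contra! h
  exact (det g).ne_zero (by rw [val_det_apply, det_eq_zero_of_column_eq_zero j h])

theorem MvPolynomial.pderiv_expand {σ : Type*} {p : ℕ} [Fact p.Prime] (i : σ)
    (f : MvPolynomial σ (ZMod p)) : pderiv i (expand p f) = 0 := by
  simp [expand_zmod, Derivation.leibniz_pow]

section Substitution

variable (p n : ℕ)

noncomputable def glSubstAlgHom (g : GL (Fin n) (ZMod p)) :
    MvPolynomial (Fin n) (ZMod p) →ₐ[ZMod p] MvPolynomial (Fin n) (ZMod p) :=
  bind₁ fun j => ∑ i, (g : Matrix (Fin n) (Fin n) (ZMod p)) i j • X i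

theorem glSubstitution_apply (g : GL (Fin n) (ZMod p)) (f : MvPolynomial (Fin n) (ZMod p)) :
    glSubstitution p n g f = glSubstAlgHom p n g f := rfl

theorem glSubstAlgHom_X (g : GL (Fin n) (ZMod p)) (j : Fin n) :
    glSubstAlgHom p n g (X j) = ∑ i, (g : Matrix (Fin n) (Fin n) (ZMod p)) i j • X i :=
  bind₁_X_right _ _

theorem glSubstAlgHom_injective : Function.Injective (glSubstAlgHom p n) := by
  intro g h hgh
  ext i j
  have := congrArg (coeff (Finsupp.single i 1)) (congrArg (· (X j)) hgh)
  simpa [glSubstAlgHom_X, coeff_sum, coeff_X, Finsupp.single_left_inj] using this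

variable [Fact p.Prime]

theorem glSubstitutionQuot_mk (g : GL (Fin n) (ZMod p)) (f : MvPolynomial (Fin n) (ZMod p)) :
    glSubstitutionQuot p n g (Submodule.Quotient.mk f) =
      Submodule.Quotient.mk (glSubstitution p n g f) := rfl

theorem linearIndependent_glSubstitution : LinearIndependent (ZMod p) (glSubstitution p n) :=
  ((linearIndependent_toLinearMap (ZMod p) (MvPolynomial (Fin n) (ZMod p))
    (MvPolynomial (Fin n) (ZMod p))).restrict_scalars' (R := ZMod p)).comp _
    (glSubstAlgHom_injective p n)

theorem pderiv_glSubstAlgHom_X_mul_expand (g : GL (Fin n) (ZMod p)) (i j : Fin n)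
    (f : MvPolynomial (Fin n) (ZMod p)) :
    pderiv i (glSubstAlgHom p n g (X j * expand p f)) =
      (g : Matrix (Fin n) (Fin n) (ZMod p)) i j • expand p (glSubstAlgHom p n g f) := by
  rw [map_mul, expand_zmod, map_pow, ← expand_zmod, Derivation.leibniz, pderiv_expand,
    smul_zero, zero_add, glSubstAlgHom_X]
  simp [pderiv_X, Pi.single_apply]

theorem pderiv_eq_zero_of_mem_expandRange {f : MvPolynomial (Fin n) (ZMod p)}
    (hf : f ∈ expandRange p n) (i : Fin n) : pderiv i f = 0 := by
  obtain ⟨w, rfl⟩ := hf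
  exact pderiv_expand i w

theorem linearIndependent_glSubstitutionQuot (hn : 1 ≤ n) :
    LinearIndependent (ZMod p) (glSubstitutionQuot p n) := by
  rw [Fintype.linearIndependent_iff]
  intro c hc g
  obtain ⟨j⟩ : Nonempty (Fin n) := ⟨⟨0, hn⟩⟩
  have hcoeff (i : Fin n) (h : GL (Fin n) (ZMod p)) :
      c h * (h : Matrix (Fin n) (Fin n) (ZMod p)) i j = 0 := by
    refine Fintype.linearIndependent_iff.mp (linearIndependent_glSubstitution p n)
      (fun h => c h * (h : Matrix (Fin n) (Fin n) (ZMod p)) i j) (LinearMap.ext fun f => ?_) h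
    have hE : ∑ h, c h • glSubstitution p n h (X j * expand p f) ∈ expandRange p n := by
      rw [← Submodule.Quotient.mk_eq_zero, ← Submodule.mkQ_apply, map_sum]
      simpa [glSubstitutionQuot_mk] using
        LinearMap.congr_fun hc (Submodule.Quotient.mk (X j * expand p f))
    apply expand_injective (Fact.out : p.Prime).pos
    calc expand p ((∑ h, (c h * (h : Matrix (Fin n) (Fin n) (ZMod p)) i j) •
          glSubstitution p n h) f)
        = pderiv i (∑ h, c h • glSubstitution p n h (X j * expand p f)) := by
          simp only [LinearMap.sum_apply, LinearMap.smul_apply, map_sum, map_smul,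
            Derivation.map_smul, glSubstitution_apply, pderiv_glSubstAlgHom_X_mul_expand, smul_smul]
      _ = expand p 0 := by rw [pderiv_eq_zero_of_mem_expandRange p n hE i, map_zero]
  obtain ⟨i, hi⟩ := g.exists_apply_ne_zero j
  exact (mul_eq_zero.mp (hcoeff i g)).resolve_right hi

end Substitution

/-- The final Lemma of Section 7 of the paper: every simple module over the group
algebra `F_p[GL_n(F_p)]` occurs as a composition factor of the `GL_n(F_p)`-module
`R/E`, where `R = F_p[X_1,…,X_n]` carries the linear-substitution action and `E` is
the subspace of polynomials in the `p`-th powers of the variables: there are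
`F_p[GL_n(F_p)]`-submodules `N ⊆ N′` of `R/E` with `N′/N` isomorphic to `S`. -/
theorem simple_module_is_composition_factor (p n : ℕ) [Fact p.Prime] (hn : 1 ≤ n)
    (S : Type) [AddCommGroup S]
    [Module (MonoidAlgebra (ZMod p) (GL (Fin n) (ZMod p))) S]
    [IsSimpleModule (MonoidAlgebra (ZMod p) (GL (Fin n) (ZMod p))) S] :
    ∃ N N' : Submodule (MonoidAlgebra (ZMod p) (GL (Fin n) (ZMod p)))
        (glSubstitutionQuot p n).asModule,
      N ≤ N' ∧
      Nonempty ((@HasQuotient.Quotient ↥N' _ (@Submodule.hasQuotient _ _ _ _ _)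
          (Submodule.comap N'.subtype N))
        ≃ₗ[MonoidAlgebra (ZMod p) (GL (Fin n) (ZMod p))] S) := by
  have := (glSubstitutionQuot p n).faithfulSMul_asModule
    (linearIndependent_glSubstitutionQuot p n hn)
  have : IsArtinianRing (MonoidAlgebra (ZMod p) (GL (Fin n) (ZMod p))) :=
    .of_finite (ZMod p) _
  exact exists_subquotient_equiv_of_faithfulSMul
end
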